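/- arXiv:2003.13955 — 9 statements merged into one kernel-verified Lean document; each statement's English description precedes it below -/
import Mathlib

section
/- The smooth sensitivity S*_{f,β}(x) = max over all datasets y of LS_f(y)·e^{-β·d(x,y)} is a β-smooth upper bound on the local sensitivity of f: it satisfies S*(x) ≥ LS_f(x) for all x, and S*(x) ≤ e^β · S*(y) whenever d(x,y)=1. -/
/-- Local sensitivity of `f` at dataset `x`. -/
noncomputable def localSens {n : ℕ} {D : Type*} [DecidableEq D]
    (f : (Fin n → D) → ℝ) (x : Fin n → D) : ℝ :=
  sSup {r : ℝ | ∃ y : Fin n → D, hammingDist x y = 1 ∧ r = |f x - f y|}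

/-- The β-smooth sensitivity of `f` at `x`. -/
noncomputable def smoothSens {n : ℕ} {D : Type*} [Fintype D] [DecidableEq D]
    (f : (Fin n → D) → ℝ) (β : ℝ) (x : Fin n → D) : ℝ :=
  ⨆ y : Fin n → D, localSens f y * Real.exp (-β * (hammingDist x y : ℝ))

lemma localSens_nonneg {n : ℕ} {D : Type*} [DecidableEq D]
    (f : (Fin n → D) → ℝ) (x : Fin n → D) : 0 ≤ localSens f x :=
  Real.sSup_nonneg (by rintro r ⟨y, -, rfl⟩; exact abs_nonneg _)

theorem smoothSens_is_smooth_upper_bound {n : ℕ} {D : Type*} [Fintype D] [DecidableEq D]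
    (f : (Fin n → D) → ℝ) (β : ℝ) (hβ : 0 < β) :
    (∀ x : Fin n → D, localSens f x ≤ smoothSens f β x) ∧
    (∀ x y : Fin n → D, hammingDist x y = 1 →
      smoothSens f β x ≤ Real.exp β * smoothSens f β y) := by
  constructor
  · intro x
    have hbdd : BddAbove (Set.range fun y : Fin n → D =>
        localSens f y * Real.exp (-β * (hammingDist x y : ℝ))) :=
      (Set.finite_range _).bddAbove
    have h := le_ciSup hbdd x
    have h0 : localSens f x * Real.exp (-β * ((hammingDist x x : ℕ) : ℝ)) = localSens f x := by
      simp [hammingDist_self]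
    rw [h0] at h
    exact h
  · intro x y hxy
    have hne : Nonempty (Fin n → D) := ⟨x⟩
    apply ciSup_le
    intro z
    have hbdd : BddAbove (Set.range fun w : Fin n → D =>
        localSens f w * Real.exp (-β * (hammingDist y w : ℝ))) :=
      (Set.finite_range _).bddAbove
    have h1 : localSens f z * Real.exp (-β * (hammingDist y z : ℝ)) ≤ smoothSens f β y :=
      le_ciSup hbdd z
    have htri : (hammingDist y z : ℝ) ≤ 1 + (hammingDist x z : ℝ) := by
      have := hammingDist_triangle y x z
      rw [hammingDist_comm y x, hxy] at this
      exact_mod_cast this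
    have hexp : Real.exp (-β * (hammingDist x z : ℝ)) ≤
        Real.exp β * Real.exp (-β * (hammingDist y z : ℝ)) := by
      rw [← Real.exp_add]
      apply Real.exp_le_exp.mpr
      nlinarith
    calc localSens f z * Real.exp (-β * (hammingDist x z : ℝ))
        ≤ localSens f z * (Real.exp β * Real.exp (-β * (hammingDist y z : ℝ))) :=
          mul_le_mul_of_nonneg_left hexp (localSens_nonneg f z)
      _ = Real.exp β * (localSens f z * Real.exp (-β * (hammingDist y z : ℝ))) := by ring
      _ ≤ Real.exp β * smoothSens f β y :=
          mul_le_mul_of_nonneg_left h1 (Real.exp_pos β).le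
end

section
/- The smooth sensitivity is the smallest β-smooth upper bound on local sensitivity: if S is any function satisfying S(x) ≥ LS_f(x) for all x and S(x) ≤ e^β S(y) for all neighboring x,y, then S(x) ≥ S*_{f,β}(x) for all x. -/
private lemma ham_step {n : ℕ} {D : Type*} [DecidableEq D] {x y : Fin n → D} {d : ℕ}
    (h : hammingDist x y = d + 1) :
    ∃ z : Fin n → D, hammingDist x z = d ∧ hammingDist z y = 1 := by
  have hne : x ≠ y := by
    intro he; rw [he, hammingDist_self] at h; omega
  obtain ⟨i, hi⟩ : ∃ i, x i ≠ y i := Function.ne_iff.mp hne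
  refine ⟨Function.update y i (x i), ?_, ?_⟩
  · have hset : ({j | x j ≠ Function.update y i (x i) j} : Finset (Fin n))
        = ({j | x j ≠ y j} : Finset (Fin n)).erase i := by
      ext j
      by_cases hj : j = i <;>
        simp [Function.update, hj, Finset.mem_erase]
    have : hammingDist x (Function.update y i (x i))
        = (({j | x j ≠ y j} : Finset (Fin n)).erase i).card := by
      rw [hammingDist, hset]
    rw [this, Finset.card_erase_of_mem (by simp [hi])]
    have : (({j | x j ≠ y j} : Finset (Fin n))).card = d + 1 := h
    omega
  · have hset : ({j | Function.update y i (x i) j ≠ y j} : Finset (Fin n)) = {i} := by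
      ext j
      by_cases hj : j = i <;> simp [Function.update, hj, hi]
    rw [hammingDist, hset, Finset.card_singleton]

private lemma S_chain {n : ℕ} {D : Type*} [DecidableEq D]
    {β : ℝ} (S : (Fin n → D) → ℝ)
    (hsmooth : ∀ x y : Fin n → D, hammingDist x y = 1 → S x ≤ Real.exp β * S y) :
    ∀ d : ℕ, ∀ x y : Fin n → D, hammingDist x y = d →
      S y ≤ Real.exp (β * d) * S x := by
  intro d
  induction d with
  | zero =>
    intro x y h
    rw [hammingDist_comm] at h
    rw [eq_of_hammingDist_eq_zero h]
    simp
  | succ d ih =>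
    intro x y h
    obtain ⟨z, hxz, hzy⟩ := ham_step h
    have h1 : S y ≤ Real.exp β * S z := by
      apply hsmooth
      rwa [hammingDist_comm]
    have h2 : S z ≤ Real.exp (β * d) * S x := ih x z hxz
    calc S y ≤ Real.exp β * S z := h1
      _ ≤ Real.exp β * (Real.exp (β * d) * S x) := by
          exact mul_le_mul_of_nonneg_left h2 (Real.exp_pos β).le
      _ = Real.exp (β * (d + 1 : ℕ)) * S x := by
          rw [← mul_assoc, ← Real.exp_add]
          push_cast
          ring_nf

/-- Smooth sensitivity is the smallest β-smooth upper bound on local sensitivity. -/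
theorem smoothSens_le_of_smooth_upper_bound {n : ℕ} {D : Type*} [Fintype D] [DecidableEq D]
    (f : (Fin n → D) → ℝ) (β : ℝ) (hβ : 0 < β) (S : (Fin n → D) → ℝ)
    (hub : ∀ x : Fin n → D, localSens f x ≤ S x)
    (hsmooth : ∀ x y : Fin n → D, hammingDist x y = 1 → S x ≤ Real.exp β * S y) :
    ∀ x : Fin n → D, smoothSens f β x ≤ S x := by
  intro x
  have : Nonempty (Fin n → D) := ⟨x⟩
  apply ciSup_le
  intro y
  have hE : (0:ℝ) < Real.exp (-β * (hammingDist x y : ℝ)) := Real.exp_pos _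
  have h1 : localSens f y ≤ S y := hub y
  have h2 : S y ≤ Real.exp (β * (hammingDist x y : ℝ)) * S x :=
    S_chain S hsmooth (hammingDist x y) x y rfl
  calc localSens f y * Real.exp (-β * (hammingDist x y : ℝ))
      ≤ S y * Real.exp (-β * (hammingDist x y : ℝ)) :=
        mul_le_mul_of_nonneg_right h1 hE.le
    _ ≤ (Real.exp (β * (hammingDist x y : ℝ)) * S x) * Real.exp (-β * (hammingDist x y : ℝ)) :=
        mul_le_mul_of_nonneg_right h2 hE.le
    _ = S x := by
        rw [mul_comm (Real.exp _) (S x), mul_assoc, ← Real.exp_add]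
        ring_nf
        simp
end

section
/- The smooth sensitivity can be computed via sensitivities at fixed distances: S*_{f,β}(x) = max over k = 0,1,...,n of e^{-kβ}·A^{(k)}(x), where A^{(k)}(x) = max over y with d(x,y) ≤ k of LS_f(y). -/
/-- `A^(k)(x)`: the sensitivity of `f` at distance `k` from `x`. -/
noncomputable def sensAtDist {n : ℕ} {D : Type*} [DecidableEq D]
    (f : (Fin n → D) → ℝ) (k : ℕ) (x : Fin n → D) : ℝ :=
  sSup {r : ℝ | ∃ y : Fin n → D, hammingDist x y ≤ k ∧ r = localSens f y}

lemma sensAtDist_set_finite {n : ℕ} {D : Type*} [Fintype D] [DecidableEq D]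
    (f : (Fin n → D) → ℝ) (k : ℕ) (x : Fin n → D) :
    Set.Finite {r : ℝ | ∃ y : Fin n → D, hammingDist x y ≤ k ∧ r = localSens f y} := by
  apply Set.Finite.subset (Set.finite_range (localSens f))
  rintro r ⟨y, -, rfl⟩
  exact ⟨y, rfl⟩

lemma le_sensAtDist {n : ℕ} {D : Type*} [Fintype D] [DecidableEq D]
    (f : (Fin n → D) → ℝ) (k : ℕ) (x y : Fin n → D) (h : hammingDist x y ≤ k) :
    localSens f y ≤ sensAtDist f k x :=
  le_csSup (sensAtDist_set_finite f k x).bddAbove ⟨y, h, rfl⟩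

theorem smoothSens_eq_max_sensAtDist {n : ℕ} {D : Type*} [Fintype D] [DecidableEq D]
    (f : (Fin n → D) → ℝ) (β : ℝ) (hβ : 0 < β) (x : Fin n → D) :
    smoothSens f β x =
      ⨆ k : Fin (n + 1), Real.exp (-(k : ℝ) * β) * sensAtDist f (k : ℕ) x := by
  by_cases hne : Nonempty (Fin n → D)
  · have bdd1 : BddAbove (Set.range fun y : Fin n → D =>
        localSens f y * Real.exp (-β * (hammingDist x y : ℝ))) :=
      (Set.finite_range _).bddAbove
    have bdd2 : BddAbove (Set.range fun k : Fin (n + 1) =>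
        Real.exp (-(k : ℝ) * β) * sensAtDist f (k : ℕ) x) :=
      (Set.finite_range _).bddAbove
    have hL0 : 0 ≤ smoothSens f β x := by
      obtain ⟨y0⟩ := hne
      have h := le_ciSup bdd1 y0
      exact le_trans (mul_nonneg (localSens_nonneg f y0) (Real.exp_pos _).le) h
    apply le_antisymm
    · apply ciSup_le
      intro y
      have hd : hammingDist x y ≤ n := by
        simpa using hammingDist_le_card_fintype (x := x) (y := y)
      set k : Fin (n + 1) := ⟨hammingDist x y, Nat.lt_succ_of_le hd⟩ with hk
      have h1 : localSens f y * Real.exp (-β * (hammingDist x y : ℝ)) ≤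
          sensAtDist f (k : ℕ) x * Real.exp (-β * (hammingDist x y : ℝ)) :=
        mul_le_mul_of_nonneg_right (le_sensAtDist f _ x y le_rfl) (Real.exp_pos _).le
      refine le_trans h1 <| le_trans (le_of_eq ?_) (le_ciSup bdd2 k)
      have : (k : ℝ) = (hammingDist x y : ℝ) := by simp [hk]
      rw [this]; ring_nf
    · apply ciSup_le
      intro k
      rw [mul_comm, ← le_div_iff₀ (Real.exp_pos _)]
      apply Real.sSup_le
      · rintro r ⟨y, hy, rfl⟩
        rw [le_div_iff₀ (Real.exp_pos _)]
        have h1 : Real.exp (-(k : ℝ) * β) ≤ Real.exp (-β * (hammingDist x y : ℝ)) := by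
          apply Real.exp_le_exp.mpr
          have : (hammingDist x y : ℝ) ≤ (k : ℝ) := by exact_mod_cast hy
          nlinarith
        calc localSens f y * Real.exp (-(k : ℝ) * β)
            ≤ localSens f y * Real.exp (-β * (hammingDist x y : ℝ)) :=
              mul_le_mul_of_nonneg_left h1 (localSens_nonneg f y)
          _ ≤ smoothSens f β x := le_ciSup bdd1 y
      · exact div_nonneg hL0 (Real.exp_pos _).le
  · have he : IsEmpty (Fin n → D) := not_nonempty_iff.mp hne
    have hs : ∀ k : Fin (n + 1), sensAtDist f (k : ℕ) x = 0 := by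
      intro k
      unfold sensAtDist
      convert Real.sSup_empty using 2
      ext r
      simp
    have hL : smoothSens f β x = 0 := by
      unfold smoothSens
      exact Real.iSup_of_isEmpty _
    simp [hL, hs]
end

section
/- Among all k-element sub-multisets of a sorted list x_1 ≤ x_2 ≤ ... ≤ x_n of reals, a subset maximizing the population variance consists only of elements from the two tails: there exists i with 0 ≤ i ≤ k such that the subset {x_1,...,x_i, x_{n-(k-i)+1},...,x_n} achieves the maximum variance over all k-element subsets. -/
open Finset

/-! With `scaledVar x s = #s * ∑ x² - (∑ x)² = #s² * svar x s`, the value `scaledVar x (insert z t)`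
is, for fixed `t`, a convex quadratic in `x z`. Hence an element of `s` lying between two
non-members can be exchanged for the least or the greatest non-member without decreasing
`scaledVar`. Each such exchange strictly shrinks the order-convex hull of the complement, so
after finitely many of them the complement is an interval, i.e. `s` is made of the two tails;
a best tail set therefore beats every `k`-subset. -/

/-- Population variance of the sub-multiset of `x` indexed by a finite index set `s`. -/
noncomputable def svar {n : ℕ} (x : Fin n → ℝ) (s : Finset (Fin n)) : ℝ :=
  (∑ i ∈ s, x i ^ 2) / s.card - ((∑ i ∈ s, x i) / s.card) ^ 2

section ScaledVariance

variable {ι : Type*} [DecidableEq ι] (x : ι → ℝ)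

noncomputable def scaledVar (s : Finset ι) : ℝ :=
  #s * ∑ i ∈ s, x i ^ 2 - (∑ i ∈ s, x i) ^ 2

lemma scaledVar_insert {t : Finset ι} {a : ι} (ha : a ∉ t) :
    scaledVar x (insert a t) = (#t * x a ^ 2 - 2 * (∑ i ∈ t, x i) * x a) +
      ((#t + 1) * ∑ i ∈ t, x i ^ 2 - (∑ i ∈ t, x i) ^ 2) := by
  rw [scaledVar, sum_insert ha, sum_insert ha, card_insert_of_notMem ha]
  push_cast
  ring

lemma convexOn_quadratic {A : ℝ} (hA : 0 ≤ A) (L : ℝ) :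
    ConvexOn ℝ Set.univ fun z : ℝ => A * z ^ 2 - 2 * L * z :=
  ((even_two.convexOn_pow).smul hA).sub ((LinearMap.mul ℝ ℝ (2 * L)).concaveOn convex_univ)

lemma scaledVar_le_swap_or {s : Finset ι} {q u v : ι} (hq : q ∈ s) (hu : u ∉ s) (hv : v ∉ s)
    (huq : x u ≤ x q) (hqv : x q ≤ x v) :
    scaledVar x s ≤ scaledVar x (insert u (s.erase q)) ∨
      scaledVar x s ≤ scaledVar x (insert v (s.erase q)) := by
  set t := s.erase q
  have hmax := (convexOn_quadratic (Nat.cast_nonneg #t) (∑ i ∈ t, x i)).le_max_of_mem_Icc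
    (Set.mem_univ (x u)) (Set.mem_univ (x v)) ⟨huq, hqv⟩
  rw [← insert_erase hq, scaledVar_insert x (notMem_erase q s),
    scaledVar_insert x fun h => hu (mem_of_mem_erase h),
    scaledVar_insert x fun h => hv (mem_of_mem_erase h)]
  rcases le_max_iff.mp hmax with h | h
  · exact Or.inl (by linarith)
  · exact Or.inr (by linarith)

end ScaledVariance

lemma svar_eq_scaledVar_div {n : ℕ} (x : Fin n → ℝ) (s : Finset (Fin n)) :
    svar x s = scaledVar x s / #s ^ 2 := by
  rcases s.eq_empty_or_nonempty with rfl | hs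
  · simp [svar, scaledVar]
  · have : (#s : ℝ) ≠ 0 := by exact_mod_cast hs.card_pos.ne'
    rw [svar, scaledVar]
    field_simp

section OrdHull

variable {ι : Type*} [LinearOrder ι] [Fintype ι]

def ordHull (C : Finset ι) : Finset ι :=
  univ.filter fun j => ∃ u ∈ C, ∃ v ∈ C, u ≤ j ∧ j ≤ v

lemma mem_ordHull {C : Finset ι} {j : ι} : j ∈ ordHull C ↔ ∃ u ∈ C, ∃ v ∈ C, u ≤ j ∧ j ≤ v := by
  simp [ordHull]

lemma subset_ordHull (C : Finset ι) : C ⊆ ordHull C :=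
  fun j hj => mem_ordHull.2 ⟨j, hj, j, hj, le_rfl, le_rfl⟩

lemma ordHull_subset_ordHull {C D : Finset ι} (h : D ⊆ ordHull C) : ordHull D ⊆ ordHull C := by
  intro j hj
  obtain ⟨u, hu, v, hv, huj, hjv⟩ := mem_ordHull.1 hj
  obtain ⟨u', hu', -, -, hu'u, -⟩ := mem_ordHull.1 (h hu)
  obtain ⟨-, -, v', hv', -, hvv'⟩ := mem_ordHull.1 (h hv)
  exact mem_ordHull.2 ⟨u', hu', v', hv', hu'u.trans huj, hjv.trans hvv'⟩

lemma ordHull_insert_erase_ssubset {C : Finset ι} {a q : ι} (ha : a ∈ C) (hq : q ∈ ordHull C)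
    (hext : (∀ c ∈ C, a ≤ c) ∧ a < q ∨ (∀ c ∈ C, c ≤ a) ∧ q < a) :
    ordHull ((insert q C).erase a) ⊂ ordHull C := by
  have hsub : (insert q C).erase a ⊆ ordHull C :=
    (erase_subset a _).trans (insert_subset hq (subset_ordHull C))
  refine (ssubset_iff_of_subset (ordHull_subset_ordHull hsub)).2 ⟨a, subset_ordHull C ha, ?_⟩
  intro h
  obtain ⟨u, hu, v, hv, hua, hav⟩ := mem_ordHull.1 h
  simp only [mem_insert, mem_erase] at hu hv
  rcases hext with ⟨hmin, haq⟩ | ⟨hmax, hqa⟩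
  · obtain ⟨hua', rfl | hu⟩ := hu
    · exact haq.not_ge hua
    · exact hua' (le_antisymm hua (hmin u hu))
  · obtain ⟨hva', rfl | hv⟩ := hv
    · exact hqa.not_ge hav
    · exact hva' (le_antisymm (hmax v hv) hav)

end OrdHull

section Exchange

variable {ι : Type*} [LinearOrder ι] [Fintype ι] {x : ι → ℝ}

lemma exists_swap_scaledVar_le_of_not_ordConnected (hx : Monotone x) {s : Finset ι}
    (hs : ¬ (↑sᶜ : Set ι).OrdConnected) :
    ∃ t : Finset ι, #t = #s ∧ scaledVar x s ≤ scaledVar x t ∧ #(ordHull tᶜ) < #(ordHull sᶜ) := by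
  obtain ⟨u, hu, v, hv, q, huq, hqv, hq⟩ : ∃ u ∉ s, ∃ v ∉ s, ∃ q, u ≤ q ∧ q ≤ v ∧ q ∈ s := by
    simpa [Set.ordConnected_def, Set.subset_def] using hs
  have hne : sᶜ.Nonempty := ⟨u, mem_compl.2 hu⟩
  have ha : sᶜ.min' hne ∉ s := mem_compl.1 (min'_mem _ _)
  have hb : sᶜ.max' hne ∉ s := mem_compl.1 (max'_mem _ _)
  have haq : sᶜ.min' hne < q :=
    (min'_le _ u (mem_compl.2 hu)).trans_lt (huq.lt_of_ne (by rintro rfl; exact hu hq))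
  have hqb : q < sᶜ.max' hne :=
    (hqv.lt_of_ne (by rintro rfl; exact hv hq)).trans_le (le_max' _ v (mem_compl.2 hv))
  have hqhull : q ∈ ordHull sᶜ := mem_ordHull.2 ⟨u, mem_compl.2 hu, v, mem_compl.2 hv, huq, hqv⟩
  have hcard : ∀ c ∉ s, #(insert c (s.erase q)) = #s := fun c hc => by
    rw [card_insert_of_notMem (fun h => hc (mem_of_mem_erase h)), card_erase_add_one hq]
  rcases scaledVar_le_swap_or x hq ha hb (hx haq.le) (hx hqb.le) with h | h
  · refine ⟨_, hcard _ ha, h, card_lt_card ?_⟩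
    rw [compl_insert, compl_erase]
    exact ordHull_insert_erase_ssubset (min'_mem _ _) hqhull (Or.inl ⟨min'_le _, haq⟩)
  · refine ⟨_, hcard _ hb, h, card_lt_card ?_⟩
    rw [compl_insert, compl_erase]
    exact ordHull_insert_erase_ssubset (max'_mem _ _) hqhull (Or.inr ⟨le_max' _, hqb⟩)

lemma exists_ordConnected_compl_scaledVar_le (hx : Monotone x) (s : Finset ι) :
    ∃ t : Finset ι, #t = #s ∧ (↑tᶜ : Set ι).OrdConnected ∧ scaledVar x s ≤ scaledVar x t := by
  by_cases hs : (↑sᶜ : Set ι).OrdConnected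
  · exact ⟨s, rfl, hs, le_rfl⟩
  · obtain ⟨t, hts, hst, hlt⟩ := exists_swap_scaledVar_le_of_not_ordConnected hx hs
    obtain ⟨r, hrt, hr, htr⟩ := exists_ordConnected_compl_scaledVar_le hx t
    exact ⟨r, hrt.trans hts, hr, hst.trans htr⟩
termination_by #(ordHull sᶜ)
decreasing_by exact hlt

end Exchange

def tails (n k i : ℕ) : Finset (Fin n) :=
  univ.filter fun j : Fin n => (j : ℕ) < i ∨ n - (k - i) ≤ (j : ℕ)

lemma exists_eq_tails_of_ordConnected_compl {n : ℕ} {s : Finset (Fin n)}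
    (hs : (↑sᶜ : Set (Fin n)).OrdConnected) : ∃ i ≤ #s, s = tails n #s i := by
  rcases sᶜ.eq_empty_or_nonempty with hC | hC
  · rw [compl_eq_empty_iff] at hC
    subst hC
    refine ⟨0, Nat.zero_le _, ?_⟩
    ext j
    simp [tails]
  set u := sᶜ.min' hC
  set v := sᶜ.max' hC
  have hCuv : sᶜ = Icc u v := by
    refine Subset.antisymm (fun j hj => mem_Icc.2 ⟨min'_le _ j hj, le_max' _ j hj⟩) fun j hj => ?_
    exact_mod_cast hs.out (min'_mem _ hC) (max'_mem _ hC) (mem_Icc.1 hj)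
  have hcard : #s + (v + 1 - u) = n := by
    rw [← Fin.card_Icc, ← hCuv, card_add_card_compl, Fintype.card_fin]
  have huv : (u : ℕ) ≤ v := min'_le _ _ (max'_mem _ hC)
  have hvn : (v : ℕ) < n := v.isLt
  refine ⟨u, by omega, ?_⟩
  ext j
  have hj : j ∈ s ↔ ¬ ((u : ℕ) ≤ j ∧ (j : ℕ) ≤ v) := by
    rw [← Fin.le_def, ← Fin.le_def, ← mem_Icc, ← hCuv, mem_compl, not_not]
  simp only [hj, tails, mem_filter, mem_univ, true_and]
  omega

theorem max_variance_subset_tails_general {n k : ℕ}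
    (x : Fin n → ℝ) (hmono : Monotone x) :
    ∃ i ≤ k, ∀ s : Finset (Fin n), s.card = k →
      svar x s ≤
        svar x (univ.filter (fun j : Fin n => (j : ℕ) < i ∨ n - (k - i) ≤ (j : ℕ))) := by
  obtain ⟨i, hi, hmax⟩ := exists_max_image (range (k + 1)) (fun i => svar x (tails n k i))
    nonempty_range_add_one
  refine ⟨i, Nat.lt_succ_iff.mp (mem_range.mp hi), fun s hs => ?_⟩
  obtain ⟨t, hts, ht, hst⟩ := exists_ordConnected_compl_scaledVar_le hmono s
  obtain ⟨j, hj, htj⟩ := exists_eq_tails_of_ordConnected_compl ht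
  rw [hts, hs] at hj htj
  calc svar x s = scaledVar x s / k ^ 2 := by rw [svar_eq_scaledVar_div, hs]
    _ ≤ scaledVar x t / k ^ 2 := by gcongr
    _ = svar x (tails n k j) := by rw [← htj, svar_eq_scaledVar_div, hts, hs]
    _ ≤ svar x (tails n k i) := hmax j (mem_range.2 (Nat.lt_succ_of_le hj))

/-- A k-element subset of maximal variance can be taken from the two tails of the
sorted list: the first `i` and the last `k - i` elements, for some `0 ≤ i ≤ k`. -/
theorem max_variance_subset_tails {n k : ℕ} (hk : 0 < k) (hkn : k < n)
    (x : Fin n → ℝ) (hmono : Monotone x) :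
    ∃ i ≤ k, ∀ s : Finset (Fin n), s.card = k →
      svar x s ≤
        svar x (univ.filter (fun j : Fin n => (j : ℕ) < i ∨ n - (k - i) ≤ (j : ℕ))) :=
  max_variance_subset_tails_general x hmono
end

section
/- Among all k-element sub-multisets of a sorted list x_1 ≤ ... ≤ x_n, a subset maximizing the variance can be obtained by removing n−k consecutive elements of the sorted list: there exists an index i such that removing x_{i+1},...,x_{i+n-k} yields a k-maximal variance subset. -/
/-!
With the other values fixed, the variance of a `k`-set is a convex quadratic function of one of its
values `t` (leading coefficient `(k - 1) / k²`). Hence if a kept index `q` lies strictly between the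
smallest and the largest removed indices `a < q < b`, exchanging `q` for `a` or for `b` does not
decrease the variance, and either exchange shrinks the span `b - a` of the removed indices.
Induction on that span ends at a set whose removed indices are consecutive, so the best of the
`k + 1` such sets has maximal variance.
-/

open Finset

lemma convexOn_add_sq_div_sub_add_div_sq {K : ℝ} (hK : 1 ≤ K) (P Q : ℝ) :
    ConvexOn ℝ Set.univ fun t : ℝ => (Q + t ^ 2) / K - ((P + t) / K) ^ 2 := by
  refine ⟨convex_univ, fun u _ v _ a b ha hb hab => ?_⟩
  have hK₀ : K ≠ 0 := by positivity
  have gap : a * ((Q + u ^ 2) / K - ((P + u) / K) ^ 2) + b * ((Q + v ^ 2) / K - ((P + v) / K) ^ 2)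
      - ((Q + (a * u + b * v) ^ 2) / K - ((P + (a * u + b * v)) / K) ^ 2)
      = (K - 1) / K ^ 2 * (a * b * (u - v) ^ 2) := by
    rw [eq_sub_of_add_eq hab]
    field_simp
    ring
  have gap_nonneg : 0 ≤ (K - 1) / K ^ 2 * (a * b * (u - v) ^ 2) := by
    have := sub_nonneg.2 hK
    positivity
  simp only [smul_eq_mul]
  linarith

section Variance

variable {n : ℕ} (x : Fin n → ℝ)

lemma svar_insert {S : Finset (Fin n)} {u : Fin n} (hu : u ∉ S) :
    svar x (insert u S) =
      ((∑ i ∈ S, x i ^ 2) + x u ^ 2) / (#S + 1 : ℝ)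
        - (((∑ i ∈ S, x i) + x u) / (#S + 1 : ℝ)) ^ 2 := by
  rw [svar, sum_insert hu, sum_insert hu, card_insert_of_notMem hu, Nat.cast_succ,
    add_comm (x u ^ 2), add_comm (x u)]

lemma svar_le_max_svar_exchange {s : Finset (Fin n)} {q a b : Fin n} (hq : q ∈ s) (ha : a ∉ s)
    (hb : b ∉ s) (hxa : x a ≤ x q) (hxb : x q ≤ x b) :
    svar x s ≤ max (svar x (insert a (s.erase q))) (svar x (insert b (s.erase q))) := by
  have hconv := convexOn_add_sq_div_sub_add_div_sq (K := #(s.erase q) + 1)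
    (by simp) (∑ i ∈ s.erase q, x i) (∑ i ∈ s.erase q, x i ^ 2)
  rw [← insert_erase hq, svar_insert x (notMem_erase q s), erase_insert (notMem_erase q s),
    svar_insert x (mt mem_of_mem_erase ha), svar_insert x (mt mem_of_mem_erase hb)]
  exact hconv.le_on_segment trivial trivial ((segment_eq_Icc (hxa.trans hxb)).symm ▸ ⟨hxa, hxb⟩)

end Variance

def withoutBlock (n i m : ℕ) : Finset (Fin n) :=
  univ.filter fun j : Fin n => (j : ℕ) < i ∨ i + m ≤ (j : ℕ)

lemma eq_withoutBlock_of_compl_eq_Icc {n : ℕ} {s : Finset (Fin n)} {a b : Fin n}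
    (h : sᶜ = Icc a b) : (a : ℕ) + (n - #s) ≤ n ∧ s = withoutBlock n a (n - #s) := by
  have hcard : n - #s = b + 1 - a := by
    rw [← Fin.card_Icc, ← h, card_compl, Fintype.card_fin]
  refine ⟨by omega, ?_⟩
  ext j
  rw [withoutBlock, mem_filter, ← not_iff_not, ← mem_compl, h, mem_Icc, Fin.le_def, Fin.le_def]
  simp only [mem_univ, true_and]
  omega

lemma eq_withoutBlock_or_exists_mem_between {n : ℕ} (s : Finset (Fin n)) (hs : #s < n) :
    (∃ i, i + (n - #s) ≤ n ∧ s = withoutBlock n i (n - #s)) ∨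
      ∃ a ∉ s, ∃ b ∉ s, ∃ q ∈ s, a < q ∧ q < b ∧ ∀ j ∉ s, a ≤ j ∧ j ≤ b := by
  have hne : sᶜ.Nonempty := by
    rw [← card_pos, card_compl, Fintype.card_fin]
    omega
  have ha := min'_mem _ hne
  have hb := max'_mem _ hne
  by_cases hq : ∃ q ∈ s, sᶜ.min' hne < q ∧ q < sᶜ.max' hne
  · obtain ⟨q, hqs, hq⟩ := hq
    exact .inr ⟨_, mem_compl.1 ha, _, mem_compl.1 hb, q, hqs, hq.1, hq.2,
      fun j hj => ⟨min'_le _ _ (mem_compl.2 hj), le_max' _ _ (mem_compl.2 hj)⟩⟩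
  · refine .inl ⟨_, eq_withoutBlock_of_compl_eq_Icc (a := sᶜ.min' hne) (b := sᶜ.max' hne) ?_⟩
    ext j
    rw [mem_Icc]
    refine ⟨fun hj => ⟨min'_le _ _ hj, le_max' _ _ hj⟩, fun ⟨hj₁, hj₂⟩ => ?_⟩
    by_contra hjs
    exact hq ⟨j, by simpa using hjs, hj₁.lt_of_ne (by rintro rfl; exact hjs ha),
      hj₂.lt_of_ne (by rintro rfl; exact hjs hb)⟩

lemma exists_svar_le_svar_withoutBlock_of_spread_le {n : ℕ} (x : Fin n → ℝ) (hx : Monotone x)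
    (m : ℕ) (s : Finset (Fin n)) (hs : #s < n) (hspread : ∀ a ∉ s, ∀ b ∉ s, (b : ℕ) ≤ a + m) :
    ∃ i, i + (n - #s) ≤ n ∧ svar x s ≤ svar x (withoutBlock n i (n - #s)) := by
  induction m using Nat.strong_induction_on generalizing s with
  | _ m ih =>
    obtain ⟨i, hi, hwin⟩ | ⟨a, ha, b, hb, q, hq, haq, hqb, hab⟩ :=
      eq_withoutBlock_or_exists_mem_between s hs
    · exact ⟨i, hi, (congrArg (svar x) hwin).le⟩
    have hexchange : ∀ c, c = a ∨ c = b → ∃ i, i + (n - #s) ≤ n ∧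
        svar x (insert c (s.erase q)) ≤ svar x (withoutBlock n i (n - #s)) := by
      intro c hc
      have hcs : c ∉ s := by rcases hc with rfl | rfl <;> assumption
      have hcard : #(insert c (s.erase q)) = #s := by
        rw [card_insert_of_notMem (mt mem_of_mem_erase hcs), card_erase_add_one hq]
      have hbound : ∀ j ∉ insert c (s.erase q), j ≠ c ∧ a ≤ j ∧ j ≤ b := by
        intro j hj
        simp only [mem_insert, mem_erase, not_or, not_and_or, not_not] at hj
        obtain ⟨hjc, rfl | hjs⟩ := hj
        · exact ⟨hjc, haq.le, hqb.le⟩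
        · exact ⟨hjc, hab j hjs⟩
      have hm := hspread a ha b hb
      rw [← hcard]
      refine ih (m - 1) (by omega) _ (hcard ▸ hs) fun j hj l hl => ?_
      have := hbound j hj
      have := hbound l hl
      omega
    obtain ⟨i₁, hi₁, h₁⟩ := hexchange a (.inl rfl)
    obtain ⟨i₂, hi₂, h₂⟩ := hexchange b (.inr rfl)
    have hswap := svar_le_max_svar_exchange x hq ha hb (hx haq.le) (hx hqb.le)
    rcases le_total (svar x (insert a (s.erase q))) (svar x (insert b (s.erase q))) with h | h
    · exact ⟨i₂, hi₂, hswap.trans (max_le (h.trans h₂) h₂)⟩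
    · exact ⟨i₁, hi₁, hswap.trans (max_le h₁ (h.trans h₁))⟩

theorem max_variance_subset_remove_consecutive_general {n k : ℕ} (hkn : k < n)
    (x : Fin n → ℝ) (hmono : Monotone x) :
    ∃ i, i + (n - k) ≤ n ∧ ∀ s : Finset (Fin n), s.card = k →
      svar x s ≤
        svar x (univ.filter (fun j : Fin n => (j : ℕ) < i ∨ i + (n - k) ≤ (j : ℕ))) := by
  obtain ⟨i₀, hi₀, hmax⟩ := exists_max_image (range (k + 1))
    (fun i => svar x (withoutBlock n i (n - k))) nonempty_range_add_one
  refine ⟨i₀, by grind, fun s hs => ?_⟩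
  obtain ⟨i, hi, hle⟩ := exists_svar_le_svar_withoutBlock_of_spread_le x hmono n s (hs ▸ hkn)
    fun a _ b _ => by omega
  rw [hs] at hi hle
  exact hle.trans (hmax i (mem_range.2 (by omega)))

/-- A k-maximal variance subset can be obtained by removing `n - k` consecutive
elements of the sorted list: removing `x_{i+1}, …, x_{i+n-k}`. -/
theorem max_variance_subset_remove_consecutive {n k : ℕ} (hk : 0 < k) (hkn : k < n)
    (x : Fin n → ℝ) (hmono : Monotone x) :
    ∃ i, i + (n - k) ≤ n ∧ ∀ s : Finset (Fin n), s.card = k →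
      svar x s ≤
        svar x (univ.filter (fun j : Fin n => (j : ℕ) < i ∨ i + (n - k) ≤ (j : ℕ))) :=
  max_variance_subset_remove_consecutive_general hkn x hmono
end

section
/- Among all k-element sub-multisets of a sorted list x_1 ≤ ... ≤ x_n, a subset minimizing the population variance consists of k consecutive elements: there exists i with 0 ≤ i ≤ n−k such that the subset {x_{i+1},...,x_{i+k}} achieves the minimum variance over all k-element subsets. -/
open Finset

/-!
If `m` is the mean of a `k`-set `s`, then every `k`-set `s'` has `svar x s' ≤ ∑_{s'} (x i - m)² / k`,
with equality for `s' = s`. As `x` is monotone, `i ↦ (x i - m)²` is quasiconvex in the index, so an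
index missing strictly between the extreme indices of `s` can replace one of them without
increasing that sum. Repeating this turns `s` into a block of consecutive indices of no larger
variance, so the best block has minimal variance among all `k`-sets.
-/

section SumSwap

variable {ι M : Type*} [DecidableEq ι] [AddCommMonoid M] [PartialOrder M] [IsOrderedAddMonoid M]

theorem Finset.sum_insert_erase_le {s : Finset ι} {a b : ι} {f : ι → M} (ha : a ∈ s) (hb : b ∉ s)
    (hf : f b ≤ f a) : ∑ i ∈ insert b (s.erase a), f i ≤ ∑ i ∈ s, f i := by
  rw [sum_insert fun h => hb (mem_of_mem_erase h), ← add_sum_erase s f ha]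
  exact add_le_add_left hf _

end SumSwap

section IntervalExchange

variable {α : Type*} [LinearOrder α] [LocallyFiniteOrder α]

theorem Finset.Icc_min'_max'_ssubset {t : Finset α} (ht : t.Nonempty) {lo hi : α}
    (hsub : t ⊆ Icc lo hi) (hout : lo ∉ t ∨ hi ∉ t) :
    Icc (t.min' ht) (t.max' ht) ⊂ Icc lo hi := by
  have hmin := mem_Icc.1 (hsub (t.min'_mem ht))
  have hmax := mem_Icc.1 (hsub (t.max'_mem ht))
  rcases hout with hlo | hhi
  · exact Icc_ssubset_Icc_left (hmin.1.trans hmin.2)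
      (hmin.1.lt_of_ne fun h => hlo (h ▸ t.min'_mem ht)) hmax.2
  · exact Icc_ssubset_Icc_right (hmin.1.trans hmin.2) hmin.1
      (hmax.2.lt_of_ne fun h => hhi (h ▸ t.max'_mem ht))

variable {β : Type*} [AddCommMonoid β] [LinearOrder β] [IsOrderedAddMonoid β]

theorem Finset.exists_card_Icc_eq_sum_le {g : α → β}
    (hg : ∀ a b c, a ≤ b → b ≤ c → g b ≤ max (g a) (g c)) (s : Finset α) (hs : s.Nonempty) :
    ∃ a b, #(Icc a b) = #s ∧ ∑ i ∈ Icc a b, g i ≤ ∑ i ∈ s, g i := by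
  induction hN : #(Icc (s.min' hs) (s.max' hs)) using Nat.strong_induction_on generalizing s with
  | _ N ih =>
  set lo := s.min' hs
  set hi := s.max' hs
  have hsub : s ⊆ Icc lo hi := fun i hmem => mem_Icc.2 ⟨min'_le _ _ hmem, le_max' _ _ hmem⟩
  by_cases hfull : Icc lo hi ⊆ s
  · have hIcc : Icc lo hi = s := hfull.antisymm hsub
    exact ⟨lo, hi, by rw [hIcc], by rw [hIcc]⟩
  obtain ⟨b, hb, hbs⟩ := not_subset.1 hfull
  -- `g` is largest at an end of `[lo, hi]`; moving that end to the gap `b` cannot increase the sum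
  obtain ⟨e, he, hgb, hend⟩ : ∃ e ∈ s, g b ≤ g e ∧ (e = lo ∨ e = hi) := by
    rcases le_max_iff.1 (hg _ _ _ (mem_Icc.1 hb).1 (mem_Icc.1 hb).2) with h | h
    exacts [⟨lo, min'_mem _ _, h, .inl rfl⟩, ⟨hi, max'_mem _ _, h, .inr rfl⟩]
  have hbe : b ∉ s.erase e := fun h => hbs (mem_of_mem_erase h)
  have heb : e ∉ insert b (s.erase e) := by
    simp only [mem_insert, mem_erase, ne_eq, not_true_eq_false, false_and, or_false]
    exact fun h => hbs (h ▸ he)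
  have hcard : #(insert b (s.erase e)) = #s := by
    rw [card_insert_of_notMem hbe, card_erase_add_one he]
  have hsub' : insert b (s.erase e) ⊆ Icc lo hi := insert_subset hb ((erase_subset _ _).trans hsub)
  have hlt := card_lt_card <| Icc_min'_max'_ssubset (insert_nonempty _ _) hsub' <| by
    rcases hend with rfl | rfl
    exacts [.inl heb, .inr heb]
  obtain ⟨a, c, hac, hsum⟩ := ih _ (hN ▸ hlt) _ (insert_nonempty _ _) rfl
  exact ⟨a, c, hac.trans hcard, hsum.trans (sum_insert_erase_le he hbs hgb)⟩

end IntervalExchange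

def window (n i k : ℕ) : Finset (Fin n) :=
  univ.filter fun j : Fin n => i ≤ (j : ℕ) ∧ (j : ℕ) < i + k

theorem Fin.exists_window_eq_Icc {n : ℕ} (a b : Fin n) :
    ∃ i ≤ n - #(Icc a b), window n i #(Icc a b) = Icc a b := by
  refine ⟨a, by rw [Fin.card_Icc]; omega, ?_⟩
  ext j
  simp only [window, mem_filter, mem_univ, true_and, mem_Icc, Fin.card_Icc, Fin.le_def]
  omega

section Variance

variable {n : ℕ} (x : Fin n → ℝ)

theorem sum_sq_sub_eq_card_mul_svar_add (s : Finset (Fin n)) (t : ℝ) :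
    ∑ i ∈ s, (x i - t) ^ 2 = #s * svar x s + #s * ((∑ i ∈ s, x i) / #s - t) ^ 2 := by
  obtain rfl | hs := s.eq_empty_or_nonempty
  · simp
  have hcard : (#s : ℝ) ≠ 0 := by exact_mod_cast hs.card_pos.ne'
  simp only [sub_sq, sum_add_distrib, sum_sub_distrib, ← sum_mul, ← mul_sum, sum_const,
    nsmul_eq_mul, svar]
  field_simp
  ring

-- The mean minimises the mean squared deviation, whose minimum is the variance.
theorem svar_le_of_sum_sq_sub_mean_le {s s' : Finset (Fin n)} (hcard : #s' = #s)
    (h : ∑ i ∈ s', (x i - (∑ i ∈ s, x i) / #s) ^ 2 ≤ ∑ i ∈ s, (x i - (∑ i ∈ s, x i) / #s) ^ 2) :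
    svar x s' ≤ svar x s := by
  obtain hs | hs := (#s).eq_zero_or_pos
  · rw [card_eq_zero.1 hs, card_eq_zero.1 (hcard.trans hs)]
  rw [sum_sq_sub_eq_card_mul_svar_add, sum_sq_sub_eq_card_mul_svar_add, sub_self, hcard] at h
  have hpos : (0 : ℝ) < #s := by exact_mod_cast hs
  nlinarith [sq_nonneg ((∑ i ∈ s', x i) / #s - (∑ i ∈ s, x i) / #s)]

theorem exists_window_svar_le (hmono : Monotone x) (s : Finset (Fin n)) (hs : s.Nonempty) :
    ∃ i ≤ n - #s, svar x (window n i #s) ≤ svar x s := by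
  set m := (∑ i ∈ s, x i) / #s
  have hg : ∀ a b c, a ≤ b → b ≤ c → (x b - m) ^ 2 ≤ max ((x a - m) ^ 2) ((x c - m) ^ 2) := by
    intro a b c hab hbc
    have hxab := hmono hab
    have hxbc := hmono hbc
    rcases le_total m (x b) with h | h
    · exact le_max_of_le_right (by nlinarith)
    · exact le_max_of_le_left (by nlinarith)
  obtain ⟨a, b, hcard, hsum⟩ := exists_card_Icc_eq_sum_le hg s hs
  obtain ⟨i, hi, hwin⟩ := Fin.exists_window_eq_Icc a b
  rw [hcard] at hi hwin
  exact ⟨i, hi, hwin ▸ svar_le_of_sum_sq_sub_mean_le x hcard hsum⟩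

end Variance

theorem min_variance_subset_consecutive_general {n k : ℕ} (hk : 0 < k)
    (x : Fin n → ℝ) (hmono : Monotone x) :
    ∃ i ≤ n - k, ∀ s : Finset (Fin n), s.card = k →
      svar x (univ.filter (fun j : Fin n => i ≤ (j : ℕ) ∧ (j : ℕ) < i + k)) ≤ svar x s := by
  obtain ⟨i, hi, hmin⟩ :=
    (Iic (n - k)).exists_min_image (fun i => svar x (window n i k)) nonempty_Iic
  refine ⟨i, mem_Iic.1 hi, fun s hs => ?_⟩
  obtain ⟨j, hj, hle⟩ := exists_window_svar_le x hmono s (card_pos.1 (hs ▸ hk))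
  subst hs
  exact (hmin j (mem_Iic.2 hj)).trans hle

/-- A k-element subset of minimal variance consists of `k` consecutive elements of the
sorted list: `x_{i+1}, …, x_{i+k}` for some `0 ≤ i ≤ n - k`. -/
theorem min_variance_subset_consecutive {n k : ℕ} (hk : 0 < k) (hkn : k < n)
    (x : Fin n → ℝ) (hmono : Monotone x) :
    ∃ i ≤ n - k, ∀ s : Finset (Fin n), s.card = k →
      svar x (univ.filter (fun j : Fin n => i ≤ (j : ℕ) ∧ (j : ℕ) < i + k)) ≤ svar x s :=
  min_variance_subset_consecutive_general hk x hmono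
end

section
/- The local sensitivity of the population variance at a dataset x of n reals in [L,U] is at most (2(U−L)·max_i|x_i − μ| + (U−L)²·(n−1)/n)/n, where μ is the mean of x; consequently the global sensitivity of variance on [L,U]-bounded datasets of size n is at most (U−L)²·(3n−1)/n². -/
/-- Population variance of `n` reals. -/
noncomputable def pvar {n : ℕ} (x : Fin n → ℝ) : ℝ :=
  (∑ i, x i ^ 2) / n - ((∑ i, x i) / n) ^ 2

/-- Local sensitivity of the population variance at `x`, over neighbors in [L,U]. -/
noncomputable def varLS {n : ℕ} (L U : ℝ) (x : Fin n → ℝ) : ℝ :=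
  sSup {r : ℝ | ∃ y : Fin n → ℝ, (∀ i, y i ∈ Set.Icc L U) ∧ hammingDist x y = 1 ∧
    r = |pvar x - pvar y|}

/-- Global sensitivity of the population variance on [L,U]-bounded datasets. -/
noncomputable def varGS (n : ℕ) (L U : ℝ) : ℝ :=
  sSup {r : ℝ | ∃ x y : Fin n → ℝ, (∀ i, x i ∈ Set.Icc L U) ∧ (∀ i, y i ∈ Set.Icc L U) ∧
    hammingDist x y = 1 ∧ r = |pvar x - pvar y|}

/-!
Changing one coordinate `a` of `x` into `b` changes the variance by
`(a - b) * ((n + 1) * (a - μ) + (n - 1) * (b - μ)) / n ^ 2`, where `μ` is the mean of `x`.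
Bounding `|a - b|` and `|b - μ|` by `U - L` and `|a - μ|` by `max_i |x_i - μ|` gives the local
bound; the global bound follows since `max_i |x_i - μ| ≤ U - L`.
-/

open Finset

lemma exists_forall_ne_eq_of_hammingDist_eq_one {ι : Type*} [Fintype ι] {β : ι → Type*}
    [∀ i, DecidableEq (β i)] {x y : ∀ i, β i} (h : hammingDist x y = 1) :
    ∃ k, ∀ i ≠ k, x i = y i := by
  obtain ⟨k, hk⟩ := card_eq_one.mp h
  refine ⟨k, fun i hik => not_not.mp fun hne => hik ?_⟩
  simpa [hk] using (mem_filter.mpr ⟨mem_univ i, hne⟩ : i ∈ univ.filter fun j => x j ≠ y j)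

lemma Fintype.sum_sub_sum_of_forall_ne_eq {ι M : Type*} [Fintype ι] [AddCommGroup M]
    {f g : ι → M} {k : ι} (h : ∀ i ≠ k, f i = g i) :
    ∑ i, g i - ∑ i, f i = g k - f k := by
  rw [← sum_sub_distrib, Fintype.sum_eq_single k fun i hik => by rw [h i hik, sub_self]]

noncomputable def mean {n : ℕ} (x : Fin n → ℝ) : ℝ := (∑ i, x i) / n

lemma mean_mem_Icc {n : ℕ} (hn : 0 < n) {L U : ℝ} {x : Fin n → ℝ}
    (hx : ∀ i, x i ∈ Set.Icc L U) : mean x ∈ Set.Icc L U := by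
  have hn' : (0 : ℝ) < n := Nat.cast_pos.mpr hn
  have hL := card_nsmul_le_sum univ x L fun i _ => (hx i).1
  have hU := sum_le_card_nsmul univ x U fun i _ => (hx i).2
  simp only [card_univ, Fintype.card_fin, nsmul_eq_mul] at hL hU
  exact ⟨(le_div_iff₀' hn').mpr hL, (div_le_iff₀' hn').mpr hU⟩

lemma abs_sub_le_of_mem_Icc {a b L U : ℝ} (ha : a ∈ Set.Icc L U) (hb : b ∈ Set.Icc L U) :
    |a - b| ≤ U - L := by
  simpa only [Real.dist_eq] using Real.dist_le_of_mem_Icc ha hb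

lemma pvar_sub_pvar_of_forall_ne_eq {n : ℕ} {x y : Fin n → ℝ} {k : Fin n}
    (h : ∀ i ≠ k, x i = y i) :
    pvar x - pvar y =
      (x k - y k) * ((n + 1) * (x k - mean x) + (n - 1) * (y k - mean x)) / n ^ 2 := by
  have hn : (n : ℝ) ≠ 0 := Nat.cast_ne_zero.mpr k.pos.ne'
  have hsum := Fintype.sum_sub_sum_of_forall_ne_eq h
  have hsq := Fintype.sum_sub_sum_of_forall_ne_eq (f := fun i => x i ^ 2) (g := fun i => y i ^ 2)
    fun i hi => by rw [h i hi]
  rw [sub_eq_iff_eq_add] at hsum hsq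
  unfold pvar mean
  rw [hsum, hsq]
  field_simp
  ring

lemma abs_pvar_sub_pvar_le {n : ℕ} {L U : ℝ} {x y : Fin n → ℝ}
    (hx : ∀ i, x i ∈ Set.Icc L U) (hy : ∀ i, y i ∈ Set.Icc L U) (hxy : hammingDist x y = 1) :
    |pvar x - pvar y| ≤
      (2 * (U - L) * (⨆ i, |x i - mean x|) + (U - L) ^ 2 * ((n : ℝ) - 1) / n) / n := by
  obtain ⟨k, hk⟩ := exists_forall_ne_eq_of_hammingDist_eq_one hxy
  have hn : (1 : ℝ) ≤ n := Nat.one_le_cast.mpr k.pos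
  set M := ⨆ i, |x i - mean x|
  have hxk : |x k - mean x| ≤ M :=
    le_ciSup (f := fun i => |x i - mean x|) (Set.finite_range _).bddAbove k
  have hyk : |y k - mean x| ≤ U - L := abs_sub_le_of_mem_Icc (hy k) (mean_mem_Icc k.pos hx)
  have hxyk : |x k - y k| ≤ U - L := abs_sub_le_of_mem_Icc (hx k) (hy k)
  have hinner : |(n + 1) * (x k - mean x) + (n - 1) * (y k - mean x)| ≤
      2 * n * M + (n - 1) * (U - L) := by
    calc _ ≤ (n + 1) * |x k - mean x| + (n - 1) * |y k - mean x| := by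
          refine (abs_add_le _ _).trans_eq ?_
          rw [abs_mul, abs_mul, abs_of_nonneg (by positivity : (0 : ℝ) ≤ n + 1),
            abs_of_nonneg (by linarith : (0 : ℝ) ≤ n - 1)]
      _ ≤ 2 * n * M + (n - 1) * (U - L) := by
          gcongr
          linarith
  rw [pvar_sub_pvar_of_forall_ne_eq hk, abs_div, abs_mul, abs_of_nonneg (sq_nonneg (n : ℝ))]
  calc _ ≤ (U - L) * (2 * n * M + (n - 1) * (U - L)) / n ^ 2 := by
        gcongr
        exact (abs_nonneg _).trans hxyk
    _ = _ := by field_simp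

lemma iSup_abs_sub_mean_le {n : ℕ} (hn : 0 < n) {L U : ℝ} (hLU : L ≤ U) {x : Fin n → ℝ}
    (hx : ∀ i, x i ∈ Set.Icc L U) : ⨆ i, |x i - mean x| ≤ U - L :=
  Real.iSup_le (fun i => abs_sub_le_of_mem_Icc (hx i) (mean_mem_Icc hn hx)) (sub_nonneg.mpr hLU)

lemma varLS_le {n : ℕ} (hn : 0 < n) {L U : ℝ} (hLU : L ≤ U) {x : Fin n → ℝ}
    (hx : ∀ i, x i ∈ Set.Icc L U) :
    varLS L U x ≤
      (2 * (U - L) * (⨆ i, |x i - mean x|) + (U - L) ^ 2 * ((n : ℝ) - 1) / n) / n := by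
  have hn' : (1 : ℝ) ≤ n := Nat.one_le_cast.mpr hn
  have hM : 0 ≤ ⨆ i, |x i - mean x| := Real.iSup_nonneg fun i => abs_nonneg _
  have hUL : 0 ≤ U - L := sub_nonneg.mpr hLU
  have hn1 : (0 : ℝ) ≤ n - 1 := sub_nonneg.mpr hn'
  refine Real.sSup_le ?_ (by positivity)
  rintro r ⟨y, hy, hxy, rfl⟩
  exact abs_pvar_sub_pvar_le hx hy hxy

lemma varGS_le {n : ℕ} (hn : 0 < n) {L U : ℝ} (hLU : L ≤ U) :
    varGS n L U ≤ (U - L) ^ 2 * (3 * (n : ℝ) - 1) / (n : ℝ) ^ 2 := by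
  have hn' : (1 : ℝ) ≤ n := Nat.one_le_cast.mpr hn
  have h3n : (0 : ℝ) ≤ 3 * n - 1 := by linarith
  refine Real.sSup_le ?_ (div_nonneg (mul_nonneg (sq_nonneg _) h3n) (sq_nonneg _))
  rintro r ⟨x, y, hx, hy, hxy, rfl⟩
  calc _ ≤ (2 * (U - L) * (⨆ i, |x i - mean x|) + (U - L) ^ 2 * ((n : ℝ) - 1) / n) / n :=
        abs_pvar_sub_pvar_le hx hy hxy
    _ ≤ (2 * (U - L) * (U - L) + (U - L) ^ 2 * ((n : ℝ) - 1) / n) / n := by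
        have hUL : 0 ≤ U - L := sub_nonneg.mpr hLU
        gcongr
        exact iSup_abs_sub_mean_le hn hLU hx
    _ = _ := by field_simp; ring

theorem variance_sensitivity_bounds {n : ℕ} (hn : 0 < n) (L U : ℝ) (hLU : L ≤ U) :
    (∀ x : Fin n → ℝ, (∀ i, x i ∈ Set.Icc L U) →
      varLS L U x ≤
        (2 * (U - L) * (⨆ i : Fin n, |x i - (∑ j, x j) / n|) +
          (U - L) ^ 2 * ((n : ℝ) - 1) / n) / n) ∧
    varGS n L U ≤ (U - L) ^ 2 * (3 * (n : ℝ) - 1) / (n : ℝ) ^ 2 :=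
  ⟨fun _ hx => varLS_le hn hLU hx, varGS_le hn hLU⟩
end

section
/- The standard Cauchy distribution satisfies the dilation property with parameter γ=2: for all λ with |λ| ≤ ε/6 and all measurable S ⊆ ℝ, Pr_{Z∼Cauchy}[Z ∈ S] ≤ e^{ε/2}·Pr_{Z∼Cauchy}[Z ∈ e^λ·S], where e^λ·S = {e^λ z : z ∈ S}. -/
/-!
The dilation `z ↦ e^λ z` has Jacobian `e^λ`, so after the change of variables `z = e^λ x` the
claim reduces to the pointwise density bound `p x ≤ e^{ε/2} e^λ p (e^λ x)` for
`p x = 1/(π(1+x²))`. Since `1 + e^{2λ} x² ≤ e^{2|λ|} (1 + x²)`, one has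
`p x ≤ e^{2|λ|} p (e^λ x)`, and `e^{2|λ|} ≤ e^{ε/2 + λ}` because `3|λ| ≤ ε/2`.
-/

open MeasureTheory

/-- The standard Cauchy distribution, with density `1/(π(1+z²))`. -/
noncomputable def cauchyMeasure : Measure ℝ :=
  volume.withDensity fun z => ENNReal.ofReal (1 / (Real.pi * (1 + z ^ 2)))

theorem withDensity_image_mul_left (f : ℝ → ENNReal) {c : ℝ} (hc : c ≠ 0) (S : Set ℝ) :
    volume.withDensity f ((c * ·) '' S) = ENNReal.ofReal |c| * ∫⁻ x in S, f (c * x) := by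
  -- `S` need not be measurable: `withDensity_apply'` holds for every set and `c * ·` is a
  -- measurable equivalence, so restriction commutes with the pushforward.
  let φ := MeasurableEquiv.mulLeft₀ c hc
  change volume.withDensity f (φ '' S) = _
  rw [withDensity_apply']
  conv_lhs => rw [← Real.smul_map_volume_mul_left hc]
  rw [Measure.restrict_smul, lintegral_smul_measure]
  change _ • ∫⁻ x, f x ∂(Measure.map φ volume).restrict (φ '' S) = _
  rw [φ.restrict_map, φ.preimage_image, lintegral_map_equiv, smul_eq_mul]
  rfl

theorem withDensity_le_mul_image_mul_left {f : ℝ → ENNReal} {c : ℝ} (hc : c ≠ 0) {r : ENNReal}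
    (hr : r ≠ ⊤) (hf : ∀ x, f x ≤ r * (ENNReal.ofReal |c| * f (c * x))) (S : Set ℝ) :
    volume.withDensity f S ≤ r * volume.withDensity f ((c * ·) '' S) := by
  rw [withDensity_image_mul_left f hc, withDensity_apply', ← lintegral_const_mul' _ _
    ENNReal.ofReal_ne_top, ← lintegral_const_mul' _ _ hr]
  exact lintegral_mono fun x => hf x

noncomputable def cauchyPDF (x : ℝ) : ℝ :=
  1 / (Real.pi * (1 + x ^ 2))

theorem cauchyMeasure_eq_withDensity :
    cauchyMeasure = volume.withDensity fun x => ENNReal.ofReal (cauchyPDF x) :=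
  rfl

theorem one_add_sq_exp_mul_le (lam x : ℝ) :
    1 + (Real.exp lam * x) ^ 2 ≤ Real.exp (2 * |lam|) * (1 + x ^ 2) := by
  have h_one : 1 ≤ Real.exp (2 * |lam|) := Real.one_le_exp (by positivity)
  have h_sq : Real.exp lam ^ 2 ≤ Real.exp (2 * |lam|) := by
    rw [← Real.exp_nat_mul]
    exact Real.exp_le_exp.2 (by push_cast; linarith [le_abs_self lam])
  nlinarith [mul_le_mul_of_nonneg_right h_sq (sq_nonneg x)]

theorem cauchyPDF_le_exp_mul_cauchyPDF_exp_mul (lam x : ℝ) :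
    cauchyPDF x ≤ Real.exp (2 * |lam|) * cauchyPDF (Real.exp lam * x) := by
  unfold cauchyPDF
  rw [← div_eq_mul_one_div, div_le_div_iff₀ (by positivity) (by positivity)]
  nlinarith [one_add_sq_exp_mul_le lam x, Real.pi_pos]

theorem cauchy_dilation_general (ε : ℝ) (lam : ℝ) (hlam : |lam| ≤ ε / 6)
    (S : Set ℝ) :
    cauchyMeasure S ≤
      ENNReal.ofReal (Real.exp (ε / 2)) * cauchyMeasure ((fun z => Real.exp lam * z) '' S) := by
  have h_exp : Real.exp (2 * |lam|) ≤ Real.exp (ε / 2) * Real.exp lam := by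
    rw [← Real.exp_add]
    exact Real.exp_le_exp.2 (by linarith [neg_abs_le lam])
  rw [cauchyMeasure_eq_withDensity]
  refine withDensity_le_mul_image_mul_left (Real.exp_pos lam).ne' ENNReal.ofReal_ne_top
    (fun x => ?_) S
  rw [abs_of_pos (Real.exp_pos lam), ← ENNReal.ofReal_mul (Real.exp_pos lam).le,
    ← ENNReal.ofReal_mul (Real.exp_pos _).le]
  refine ENNReal.ofReal_le_ofReal ((cauchyPDF_le_exp_mul_cauchyPDF_exp_mul lam x).trans ?_)
  rw [← mul_assoc]
  exact mul_le_mul_of_nonneg_right h_exp (by unfold cauchyPDF; positivity)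

/-- Dilation property of the standard Cauchy distribution (γ = 2):
for |λ| ≤ ε/6, `Pr[Z ∈ S] ≤ e^{ε/2} · Pr[Z ∈ e^λ · S]`. -/
theorem cauchy_dilation (ε : ℝ) (hε : 0 < ε) (lam : ℝ) (hlam : |lam| ≤ ε / 6)
    (S : Set ℝ) (hS : MeasurableSet S) :
    cauchyMeasure S ≤
      ENNReal.ofReal (Real.exp (ε / 2)) * cauchyMeasure ((fun z => Real.exp lam * z) '' S) :=
  cauchy_dilation_general ε lam hlam S
end

section
/- The standard Cauchy distribution satisfies the sliding property with parameter γ=2: for all ξ with |ξ| ≤ ε/6 and all measurable S ⊆ ℝ, Pr_{Z∼Cauchy}[Z ∈ S] ≤ e^{ε/2}·Pr_{Z∼Cauchy}[Z ∈ S + ξ], where S + ξ = {z+ξ : z ∈ S}. -/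
open MeasureTheory

lemma cauchy_density_ratio (ε : ℝ) (hε : 0 < ε) (hε1 : ε ≤ 1) (ξ : ℝ) (hξ : |ξ| ≤ ε / 6)
    (y : ℝ) :
    1 / (Real.pi * (1 + y ^ 2)) ≤
      Real.exp (ε / 2) * (1 / (Real.pi * (1 + (y + ξ) ^ 2))) := by
  have hpi := Real.pi_pos
  have ha : (0:ℝ) < 1 + y ^ 2 := by positivity
  have hb : (0:ℝ) < 1 + (y + ξ) ^ 2 := by positivity
  have key : 1 + (y + ξ) ^ 2 ≤ (1 + |ξ|) ^ 2 * (1 + y ^ 2) := by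
    have h1 : y * ξ ≤ |y| * |ξ| := by
      calc y * ξ ≤ |y * ξ| := le_abs_self _
        _ = |y| * |ξ| := abs_mul y ξ
    have h2 : 2 * |y| ≤ 1 + y ^ 2 := by nlinarith [sq_nonneg (|y| - 1), sq_abs y]
    nlinarith [abs_nonneg ξ, abs_nonneg y, sq_abs y, sq_abs ξ,
      mul_nonneg (abs_nonneg y) (abs_nonneg ξ), mul_le_mul_of_nonneg_right h2 (abs_nonneg ξ)]
  have hc : (1 + |ξ|) ^ 2 ≤ Real.exp (ε / 2) := by
    have h1 : 1 + |ξ| ≤ Real.exp |ξ| := by linarith [Real.add_one_le_exp |ξ|]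
    have h2 : (1 + |ξ|) ^ 2 ≤ Real.exp |ξ| ^ 2 := by
      have := abs_nonneg ξ
      nlinarith [Real.exp_pos |ξ|]
    calc (1 + |ξ|) ^ 2 ≤ Real.exp |ξ| ^ 2 := h2
      _ = Real.exp (2 * |ξ|) := by rw [← Real.exp_nat_mul]; ring_nf
      _ ≤ Real.exp (ε / 2) := Real.exp_le_exp.2 (by linarith)
  have hkey2 : 1 + (y + ξ) ^ 2 ≤ Real.exp (ε / 2) * (1 + y ^ 2) := by
    calc 1 + (y + ξ) ^ 2 ≤ (1 + |ξ|) ^ 2 * (1 + y ^ 2) := key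
      _ ≤ Real.exp (ε / 2) * (1 + y ^ 2) := by nlinarith
  rw [mul_one_div, div_le_div_iff₀ (by positivity) (by positivity)]
  nlinarith [hkey2, hpi, mul_le_mul_of_nonneg_left hkey2 hpi.le]

/-- Sliding property of the standard Cauchy distribution (γ = 2):
for |ξ| ≤ ε/6, `Pr[Z ∈ S] ≤ e^{ε/2} · Pr[Z ∈ S + ξ]`. -/
theorem cauchy_sliding (ε : ℝ) (hε : 0 < ε) (hε1 : ε ≤ 1) (ξ : ℝ) (hξ : |ξ| ≤ ε / 6)
    (S : Set ℝ) (hS : MeasurableSet S) :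
    cauchyMeasure S ≤
      ENNReal.ofReal (Real.exp (ε / 2)) * cauchyMeasure ((fun z => z + ξ) '' S) := by
  have himg : (fun z => z + ξ) '' S = (fun z => z - ξ) ⁻¹' S := by
    ext z
    simp only [Set.mem_image, Set.mem_preimage]
    constructor
    · rintro ⟨y, hy, rfl⟩; simpa using hy
    · intro h; exact ⟨z - ξ, h, by ring⟩
  have hSm : MeasurableSet ((fun z => z - ξ) ⁻¹' S) :=
    (measurable_sub_const ξ) hS
  rw [himg]
  simp only [cauchyMeasure]
  rw [withDensity_apply _ hS, withDensity_apply _ hSm]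
  have hchg :
      ∫⁻ z in (fun z => z - ξ) ⁻¹' S,
          ENNReal.ofReal (1 / (Real.pi * (1 + z ^ 2))) ∂volume
        = ∫⁻ y in S, ENNReal.ofReal (1 / (Real.pi * (1 + (y + ξ) ^ 2))) ∂volume := by
    have hmp : MeasurePreserving (fun z : ℝ => z - ξ) volume volume :=
      measurePreserving_sub_right volume ξ
    have hemb : MeasurableEmbedding (fun z : ℝ => z - ξ) :=
      (Homeomorph.subRight ξ).measurableEmbedding
    have := hmp.setLIntegral_comp_preimage_emb hemb
      (fun y => ENNReal.ofReal (1 / (Real.pi * (1 + (y + ξ) ^ 2)))) S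
    simpa [sub_add_cancel] using this
  rw [hchg, ← lintegral_const_mul' _ _ ENNReal.ofReal_ne_top]
  refine setLIntegral_mono' hS fun y _ => ?_
  rw [← ENNReal.ofReal_mul (Real.exp_pos _).le]
  exact ENNReal.ofReal_le_ofReal (cauchy_density_ratio ε hε hε1 ξ hξ y)
end
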